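/- arXiv:quant-ph/0205163 — 8 statements merged into one kernel-verified Lean document; each statement's English description precedes it below -/
import Mathlib

section
/- Let (Σ, L, ξ) be a state property system with Cartan map κ. Then the pair (Σ, κ(L)), where κ(L) = {κ(a) | a ∈ L}, is a closure space: ∅ ∈ κ(L), Σ ∈ κ(L), and κ(L) is closed under arbitrary nonempty intersections. -/
/-- A state property system `(Σ, L, ξ)`: a set of states `S`, a complete lattice `L`
(bottom `⊥ = 0`, top `⊤ = I`) and a map `ξ` sending each state to the set of properties
actual in it, such that `0` is never actual, actual properties are closed under arbitrary
infima (of arbitrary families, in particular `⊤ = sInf ∅` is always actual), and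
`a ≤ b ↔ ∀ r, a ∈ ξ r → b ∈ ξ r`. -/
structure SPS (S : Type*) (L : Type*) [CompleteLattice L] where
  ξ : S → Set L
  bot_not_mem : ∀ p, ⊥ ∉ ξ p
  sInf_mem : ∀ p, ∀ A ⊆ ξ p, sInf A ∈ ξ p
  le_iff : ∀ a b : L, a ≤ b ↔ ∀ r, a ∈ ξ r → b ∈ ξ r

/-- The Cartan map `κ : L → P(Σ)`, `κ a = {p | a ∈ ξ p}`. -/
def SPS.cartan {S L : Type*} [CompleteLattice L] (P : SPS S L) (a : L) : Set S :=
  {p | a ∈ P.ξ p}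

/-- `a` and `b` are separated by a super selection rule. -/
def SPS.ssr {S L : Type*} [CompleteLattice L] (P : SPS S L) (a b : L) : Prop :=
  ∀ p, a ⊔ b ∈ P.ξ p → a ∈ P.ξ p ∨ b ∈ P.ξ p

/-- `a` is a classical property: it has a complement `c` with `a ⊔ c = ⊤`, `a ⊓ c = ⊥`
and `a` ssr `c`. -/
def SPS.IsClassical {S L : Type*} [CompleteLattice L] (P : SPS S L) (a : L) : Prop :=
  ∃ c : L, a ⊔ c = ⊤ ∧ a ⊓ c = ⊥ ∧ P.ssr a c

/-- `(X, F)` is a closure space: `∅ ∈ F`, `X ∈ F`, and `F` is closed under arbitrary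
nonempty intersections. -/
def IsClosureSpace {X : Type*} (F : Set (Set X)) : Prop :=
  ∅ ∈ F ∧ Set.univ ∈ F ∧ ∀ G ⊆ F, G.Nonempty → ⋂₀ G ∈ F

/-- In a closure space `(X, F)`, a set is closed iff it is in `F`, open iff its complement
is in `F`, and clopen iff both. -/
def IsClopenIn {X : Type*} (F : Set (Set X)) (A : Set X) : Prop :=
  A ∈ F ∧ Aᶜ ∈ F

/-- A closure space is connected iff its only clopen subsets are `∅` and `X`. -/
def IsConnectedCS {X : Type*} (F : Set (Set X)) : Prop :=
  ∀ A : Set X, IsClopenIn F A → A = ∅ ∨ A = Set.univ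

/-- A subset `A` of a closure space `(X, F)` is connected iff the induced subspace
`(A, {F ∩ A | F ∈ F})` is connected, i.e. the only subsets of `A` that are clopen in the
trace closure space are `∅` and `A`. -/
def IsConnectedSubset {X : Type*} (F : Set (Set X)) (A : Set X) : Prop :=
  ∀ B ⊆ A, (∃ C ∈ F, B = C ∩ A) → (∃ D ∈ F, A \ B = D ∩ A) → B = ∅ ∨ B = A

/-- The connection component of `x`: the union of all connected subsets containing `x`. -/
def component {X : Type*} (F : Set (Set X)) (x : X) : Set X :=
  ⋃₀ {A : Set X | x ∈ A ∧ IsConnectedSubset F A}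

/-- The closure operator of a closure space: `cl A` is the intersection of all members of
`F` containing `A` (the least such member, i.e. the supremum operation of the lattice `F`
applied to unions). -/
def closureOf {X : Type*} (F : Set (Set X)) (A : Set X) : Set X :=
  ⋂₀ {C ∈ F | A ⊆ C}

namespace SPS

variable {S L : Type*} [CompleteLattice L] (P : SPS S L)

theorem cartan_mono : Monotone P.cartan :=
  fun a b hab p hp => (P.le_iff a b).mp hab p hp

theorem top_mem (p : S) : ⊤ ∈ P.ξ p := by
  simpa using P.sInf_mem p ∅ (Set.empty_subset _)

theorem cartan_bot : P.cartan ⊥ = ∅ :=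
  Set.eq_empty_of_forall_notMem P.bot_not_mem

theorem cartan_top : P.cartan ⊤ = Set.univ :=
  Set.eq_univ_of_forall P.top_mem

theorem cartan_sInf (A : Set L) : P.cartan (sInf A) = ⋂ a ∈ A, P.cartan a := by
  ext p
  simp only [Set.mem_iInter]
  exact ⟨fun hp a ha => P.cartan_mono (sInf_le ha) hp, fun hp => P.sInf_mem p A hp⟩

theorem sInter_mem_range_cartan {G : Set (Set S)} (hG : G ⊆ Set.range P.cartan) :
    ⋂₀ G ∈ Set.range P.cartan := by
  refine ⟨sInf (P.cartan ⁻¹' G), ?_⟩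
  rw [P.cartan_sInf, ← Set.sInter_image, Set.image_preimage_eq_of_subset hG]

end SPS

/-- For a state property system `(Σ, L, ξ)` with Cartan map `κ`,
the pair `(Σ, κ(L))` with `κ(L) = {κ a | a ∈ L}` is a closure space: it contains `∅`
and `Σ`, and is closed under arbitrary nonempty intersections. -/
theorem stmt_0 {S L : Type*} [CompleteLattice L] (P : SPS S L) :
    IsClosureSpace (Set.range P.cartan) :=
  ⟨⟨⊥, P.cartan_bot⟩, ⟨⊤, P.cartan_top⟩, fun _ hG _ => P.sInter_mem_range_cartan hG⟩
end

section
/- Let (Σ, F) be a closure space and define ξ' : Σ → P(F) by ξ'(x) = {F ∈ F | x ∈ F}. Then (Σ, F, ξ') is a state property system, where F is ordered by inclusion (so that F is a complete lattice with infima given by intersections, bottom ∅ and top Σ). -/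
theorem IsClosureSpace.sInter_mem_of_subset {X : Type*} {F : Set (Set X)} (hF : IsClosureSpace F)
    {x : X} {G : Set (Set X)} (hG : G ⊆ {A ∈ F | x ∈ A}) (hne : G.Nonempty) :
    ⋂₀ G ∈ {A ∈ F | x ∈ A} :=
  ⟨hF.2.2 G (fun _ hA => (hG hA).1) hne, Set.mem_sInter.2 fun _ hA => (hG hA).2⟩

theorem subset_iff_forall_mem_imp_mem {X : Type*} {F : Set (Set X)} {A B : Set X}
    (hA : A ∈ F) (hB : B ∈ F) :
    A ⊆ B ↔ ∀ r, A ∈ {C ∈ F | r ∈ C} → B ∈ {C ∈ F | r ∈ C} :=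
  ⟨fun hAB _ hr => ⟨hB, hAB hr.2⟩, fun h r hr => (h r ⟨hA, hr⟩).2⟩

/-- For a closure space `(Σ, F)`, setting `ξ' x = {A ∈ F | x ∈ A}`,
the triple `(Σ, F, ξ')` is a state property system, where `F` is ordered by inclusion:
it is a complete lattice with infima given by intersections (the infimum of the empty
family being the top element `Σ = univ`), bottom `∅` and top `Σ`.  Spelled out, the three
axioms of a state property system read:
(i) the bottom `∅` is in no `ξ' x`;
(ii) the infimum (in `F`) of any family of members of `ξ' x` is again in `ξ' x`
    (the infimum of a nonempty family is its intersection, that of the empty family is `univ`);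
(iii) for `A, B ∈ F`: `A ⊆ B ↔ ∀ r, A ∈ ξ' r → B ∈ ξ' r`. -/
theorem stmt_1 {X : Type*} (F : Set (Set X)) (hF : IsClosureSpace F)
    (ξ' : X → Set (Set X)) (hξ' : ∀ x, ξ' x = {A ∈ F | x ∈ A}) :
    (∀ x, ∅ ∉ ξ' x) ∧
    (∀ x, Set.univ ∈ ξ' x) ∧
    (∀ x, ∀ G ⊆ ξ' x, G.Nonempty → ⋂₀ G ∈ ξ' x) ∧
    (∀ A ∈ F, ∀ B ∈ F, (A ⊆ B ↔ ∀ r, A ∈ ξ' r → B ∈ ξ' r)) := by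
  obtain rfl : ξ' = fun x => {A ∈ F | x ∈ A} := funext hξ'
  exact ⟨fun _ h => h.2, fun _ => ⟨hF.2.1, trivial⟩,
    fun _ _ hG hne => IsClosureSpace.sInter_mem_of_subset hF hG hne,
    fun _ hA _ hB => subset_iff_forall_mem_imp_mem hA hB⟩
end

section
/- Let (Σ, L, ξ) be a state property system with Cartan map κ. For a, b ∈ L the following are equivalent: (1) a ssr b; (2) κ(a ∨ b) = κ(a) ∪ κ(b); (3) κ(a) ∪ κ(b) ∈ κ(L), i.e., κ(a) ∪ κ(b) = κ(c) for some c ∈ L. -/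
/-!
By axiom (iii) the Cartan map is an order embedding of `L` into `P(Σ)`, so always
`κ a ∪ κ b ⊆ κ (a ⊔ b)`, and `a ssr b` is literally the reverse inclusion. Conversely, if
`κ a ∪ κ b = κ c` then `c` bounds `a` and `b`, whence `κ (a ⊔ b) ⊆ κ c = κ a ∪ κ b`.
-/

namespace SPS

variable {S L : Type*} [CompleteLattice L] (P : SPS S L)

theorem cartan_subset_cartan_iff {a b : L} : P.cartan a ⊆ P.cartan b ↔ a ≤ b :=
  (P.le_iff a b).symm

theorem cartan_union_subset_cartan_sup (a b : L) :
    P.cartan a ∪ P.cartan b ⊆ P.cartan (a ⊔ b) :=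
  Set.union_subset (P.cartan_mono le_sup_left) (P.cartan_mono le_sup_right)

theorem ssr_iff_cartan_sup_subset {a b : L} :
    P.ssr a b ↔ P.cartan (a ⊔ b) ⊆ P.cartan a ∪ P.cartan b :=
  Iff.rfl

theorem ssr_iff_cartan_sup_eq {a b : L} :
    P.ssr a b ↔ P.cartan (a ⊔ b) = P.cartan a ∪ P.cartan b := by
  rw [ssr_iff_cartan_sup_subset, (P.cartan_union_subset_cartan_sup a b).ge_iff_eq']

theorem ssr_of_cartan_union_eq {a b c : L} (h : P.cartan a ∪ P.cartan b = P.cartan c) :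
    P.ssr a b := by
  have hac : a ≤ c := P.cartan_subset_cartan_iff.1 (h ▸ Set.subset_union_left)
  have hbc : b ≤ c := P.cartan_subset_cartan_iff.1 (h ▸ Set.subset_union_right)
  exact P.ssr_iff_cartan_sup_subset.2 (h ▸ P.cartan_mono (sup_le hac hbc))

end SPS

/-- For a state property system with Cartan map `κ` and `a b : L`, the
following are equivalent: (1) `a ssr b`; (2) `κ (a ⊔ b) = κ a ∪ κ b`;
(3) `κ a ∪ κ b ∈ κ(L)`, i.e. `κ a ∪ κ b = κ c` for some `c`. -/
theorem stmt_2 {S L : Type*} [CompleteLattice L] (P : SPS S L) (a b : L) :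
    (P.ssr a b ↔ P.cartan (a ⊔ b) = P.cartan a ∪ P.cartan b) ∧
    (P.ssr a b ↔ ∃ c : L, P.cartan a ∪ P.cartan b = P.cartan c) :=
  ⟨P.ssr_iff_cartan_sup_eq,
    ⟨fun h => ⟨a ⊔ b, (P.ssr_iff_cartan_sup_eq.1 h).symm⟩,
      fun ⟨_, hc⟩ => P.ssr_of_cartan_union_eq hc⟩⟩
end

section
/- Let (Σ, L, ξ) be a state property system with Cartan map κ, and let a, b ∈ L be classical properties with complements a^c, b^c. Then: (1) for every p ∈ Σ, a ∈ ξ(p) if and only if a^c ∉ ξ(p); (2) κ(a^c) = Σ \ κ(a); (3) if a ≤ b then b^c ≤ a^c. -/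
/-
Actual properties are closed under binary meets, so `a` and its complement are never both
actual (their meet is `0`), while `a ⊔ aᶜ = I` is always actual and the super selection rule
makes one of them actual. Hence in every state exactly one of `a`, `aᶜ` is actual. If `a ≤ b`
and `bᶜ` is actual but `aᶜ` is not, then `a`, hence `b`, is actual together with `bᶜ`,
which is impossible.
-/

namespace SPS

variable {S L : Type*} [CompleteLattice L] (P : SPS S L)

theorem inf_mem {p : S} {a b : L} (ha : a ∈ P.ξ p) (hb : b ∈ P.ξ p) : a ⊓ b ∈ P.ξ p := by
  simpa [sInf_pair] using
    P.sInf_mem p {a, b} (Set.insert_subset ha (Set.singleton_subset_iff.2 hb))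

theorem mem_of_le {p : S} {a b : L} (hab : a ≤ b) (ha : a ∈ P.ξ p) : b ∈ P.ξ p :=
  (P.le_iff a b).1 hab p ha

theorem notMem_of_inf_eq_bot {p : S} {a c : L} (h : a ⊓ c = ⊥) (ha : a ∈ P.ξ p) :
    c ∉ P.ξ p := fun hc => P.bot_not_mem p (h ▸ P.inf_mem ha hc)

theorem mem_or_mem_of_sup_eq_top {a c : L} (h : a ⊔ c = ⊤) (hssr : P.ssr a c) (p : S) :
    a ∈ P.ξ p ∨ c ∈ P.ξ p :=
  hssr p (h ▸ P.top_mem p)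

theorem mem_iff_notMem_of_classical {a c : L} (h₁ : a ⊔ c = ⊤) (h₂ : a ⊓ c = ⊥)
    (hssr : P.ssr a c) (p : S) : a ∈ P.ξ p ↔ c ∉ P.ξ p :=
  ⟨P.notMem_of_inf_eq_bot h₂, (P.mem_or_mem_of_sup_eq_top h₁ hssr p).resolve_right⟩

theorem cartan_eq_compl_of_classical {a c : L} (h₁ : a ⊔ c = ⊤) (h₂ : a ⊓ c = ⊥)
    (hssr : P.ssr a c) : P.cartan c = (P.cartan a)ᶜ := by
  ext p
  simp [cartan, P.mem_iff_notMem_of_classical h₁ h₂ hssr p]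

theorem le_of_le_of_complements {a ac b bc : L} (ha₁ : a ⊔ ac = ⊤) (hssr : P.ssr a ac)
    (hb₂ : b ⊓ bc = ⊥) (hab : a ≤ b) : bc ≤ ac := by
  refine (P.le_iff bc ac).2 fun p hbc => ?_
  refine (P.mem_or_mem_of_sup_eq_top ha₁ hssr p).resolve_left fun ha => ?_
  exact P.notMem_of_inf_eq_bot hb₂ (P.mem_of_le hab ha) hbc

end SPS

theorem stmt_4_general {S L : Type*} [CompleteLattice L] (P : SPS S L) (a ac b bc : L)
    (ha1 : a ⊔ ac = ⊤) (ha2 : a ⊓ ac = ⊥) (ha3 : P.ssr a ac)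
    (hb2 : b ⊓ bc = ⊥) :
    (∀ p, a ∈ P.ξ p ↔ ac ∉ P.ξ p) ∧
    P.cartan ac = (P.cartan a)ᶜ ∧
    (a ≤ b → bc ≤ ac) :=
  ⟨P.mem_iff_notMem_of_classical ha1 ha2 ha3, P.cartan_eq_compl_of_classical ha1 ha2 ha3,
    P.le_of_le_of_complements ha1 ha3 hb2⟩

/-- Let `a, b` be classical properties with complements `ac, bc`. Then:
(1) `a ∈ ξ p ↔ ac ∉ ξ p` for every state `p`;
(2) `κ ac = (κ a)ᶜ` (set complement in `Σ`);
(3) `a ≤ b → bc ≤ ac`. -/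
theorem stmt_4 {S L : Type*} [CompleteLattice L] (P : SPS S L) (a ac b bc : L)
    (ha1 : a ⊔ ac = ⊤) (ha2 : a ⊓ ac = ⊥) (ha3 : P.ssr a ac)
    (hb1 : b ⊔ bc = ⊤) (hb2 : b ⊓ bc = ⊥) (hb3 : P.ssr b bc) :
    (∀ p, a ∈ P.ξ p ↔ ac ∉ P.ξ p) ∧
    P.cartan ac = (P.cartan a)ᶜ ∧
    (a ≤ b → bc ≤ ac) :=
  stmt_4_general P a ac b bc ha1 ha2 ha3 hb2
end

section
/- Let (Σ, F) be a closure space and let G(Σ, F) = (Σ, F, ξ') be the associated state property system, where ξ'(x) = {F ∈ F | x ∈ F} and F is ordered by inclusion. Then (Σ, F) is connected if and only if (Σ, F, ξ') is a pure nonclassical state property system (i.e., its only classical properties are ∅ and Σ). -/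
/-!
A set `B ∈ F` witnessing that `A` is classical must be the complement of `A`: the
superselection rule applied at every point of `cl (A ∪ B) = X` shows that `A` and `B` cover
`X`, and they are disjoint. Conversely `Aᶜ` is always such a witness once it lies in `F`,
because `A ∪ Aᶜ` is already everything. Hence the classical properties are exactly the clopen
sets, and purity means connectedness.
-/

section

open Set

variable {X : Type*} {F : Set (Set X)} {A B : Set X}

theorem closureOf_univ : closureOf F univ = univ :=
  eq_univ_of_forall fun _ _ hC => hC.2 (mem_univ _)

/-- `B` witnesses that `A` is a classical property of the state property system of `(X, F)`,
whose join is `A ⊔ B = closureOf F (A ∪ B)`. -/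
def IsSsrComplement (F : Set (Set X)) (A B : Set X) : Prop :=
  closureOf F (A ∪ B) = univ ∧ A ∩ B = ∅ ∧ ∀ p ∈ closureOf F (A ∪ B), p ∈ A ∨ p ∈ B

theorem isSsrComplement_iff : IsSsrComplement F A B ↔ B = Aᶜ := by
  constructor
  · rintro ⟨hcl, hdisj, hssr⟩
    have hcover : A ∪ B = univ :=
      eq_univ_of_forall fun p => hssr p (hcl ▸ mem_univ p)
    exact (IsCompl.compl_eq ⟨disjoint_iff_inter_eq_empty.mpr hdisj,
      codisjoint_iff.mpr hcover⟩).symm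
  · rintro rfl
    exact ⟨by rw [union_compl_self, closureOf_univ], inter_compl_self A, fun p _ => em _⟩

theorem exists_isSsrComplement_iff : (∃ B ∈ F, IsSsrComplement F A B) ↔ Aᶜ ∈ F := by
  simp only [isSsrComplement_iff, exists_eq_right]

end

theorem stmt_7_general {X : Type*} (F : Set (Set X)) :
    IsConnectedCS F ↔
      ∀ A ∈ F,
        (∃ B ∈ F, closureOf F (A ∪ B) = Set.univ ∧ A ∩ B = ∅ ∧
            ∀ p ∈ closureOf F (A ∪ B), p ∈ A ∨ p ∈ B) →
        A = ∅ ∨ A = Set.univ :=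
  forall_congr' fun _ =>
    ⟨fun h hA hB => h ⟨hA, exists_isSsrComplement_iff.mp hB⟩,
      fun h ⟨hA, hAc⟩ => h hA (exists_isSsrComplement_iff.mpr hAc)⟩

/-- Let `(Σ, F)` be a closure space and `G(Σ, F) = (Σ, F, ξ')` the associated
state property system, `ξ' x = {A ∈ F | x ∈ A}`, with `F` ordered by inclusion
(bottom `∅`, top `univ`, meet = intersection, and join `A ⊔ B = cl (A ∪ B)`, the least
member of `F` containing `A ∪ B`).  Then `(Σ, F)` is connected iff `(Σ, F, ξ')` is a pure
nonclassical state property system, i.e. its only classical properties are `∅` and `Σ`.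
Here `A ∈ F` is classical iff there is `B ∈ F` with `A ⊔ B = univ`, `A ⊓ B = A ∩ B = ∅`
and `A ssr B`, the latter meaning `A ⊔ B ∈ ξ' p → A ∈ ξ' p ∨ B ∈ ξ' p`, i.e.
`p ∈ cl (A ∪ B) → p ∈ A ∨ p ∈ B`. -/
theorem stmt_7 {X : Type*} (F : Set (Set X)) (hF : IsClosureSpace F) :
    IsConnectedCS F ↔
      ∀ A ∈ F,
        (∃ B ∈ F, closureOf F (A ∪ B) = Set.univ ∧ A ∩ B = ∅ ∧
            ∀ p ∈ closureOf F (A ∪ B), p ∈ A ∨ p ∈ B) →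
        A = ∅ ∨ A = Set.univ :=
  stmt_7_general F
end

section
/- Let (Σ, L, ξ) be a state property system with Cartan map κ, let ω be a connection component of the closure space (Σ, κ(L)), and suppose there exists s(ω) ∈ L with κ(s(ω)) = ω. Define Σ_ω = ω, L_ω = [0, s(ω)] = {a ∈ L | 0 ≤ a ≤ s(ω)} (a complete lattice with the order inherited from L), and ξ_ω : Σ_ω → P(L_ω), ξ_ω(p) = ξ(p) ∩ L_ω. Then (Σ_ω, L_ω, ξ_ω) is a state property system. -/
/-! Every state of `ω = κ s` has `s` among its actual properties, so the infimum in `[0, s]`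
of a family of actual properties, which is the infimum in `L` of the family with `s` adjoined,
is again actual. Conversely a state in which some `a ≤ s` is actual lies in `κ s = ω`, so the
order of `[0, s]` is still detected by the states of `ω`. -/

namespace SPS

variable {S L : Type*} [CompleteLattice L]

def restrict (P : SPS S L) (s : L) (ω : Set S) (hω : P.cartan s = ω) : SPS ω (Set.Iic s) where
  ξ p := {a | (a : L) ∈ P.ξ p}
  bot_not_mem p := P.bot_not_mem p
  sInf_mem p A hA := by
    have hs : (p : S) ∈ P.cartan s := hω ▸ p.2
    change ((sInf A : Set.Iic s) : L) ∈ P.ξ p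
    rw [Set.Iic.coe_sInf, ← sInf_insert]
    refine P.sInf_mem p _ (Set.insert_subset hs ?_)
    rintro _ ⟨b, hb, rfl⟩
    exact hA hb
  le_iff a b := by
    rw [← Subtype.coe_le_coe, P.le_iff]
    refine ⟨fun h r => h r, fun h r ha => ?_⟩
    have hr : r ∈ ω := hω ▸ (P.le_iff a s).mp a.2 r ha
    exact h ⟨r, hr⟩ ha

end SPS

/-- Let `(Σ, L, ξ)` be a state property system with Cartan map `κ`, let
`ω = K x` be a connection component of the closure space `(Σ, κ(L))` and suppose
`s(ω) ∈ L` satisfies `κ (s ω) = ω`.  With `Σ_ω = ω`, `L_ω = [0, s ω] = Set.Iic (s ω)`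
(a complete lattice with the order inherited from `L`) and `ξ_ω p = ξ p ∩ L_ω`, the triple
`(Σ_ω, L_ω, ξ_ω)` is a state property system.  (The state property system `Q` below is
pinned by the requirement `a ∈ Q.ξ p ↔ a ∈ ξ p`, i.e. `Q.ξ p = ξ p ∩ L_ω`.) -/
theorem stmt_10 {S L : Type*} [CompleteLattice L] (P : SPS S L) (x : S) (sω : L)
    (hs : P.cartan sω = component (Set.range P.cartan) x) :
    ∃ Q : SPS ↥(component (Set.range P.cartan) x) ↥(Set.Iic sω),
      ∀ (p : ↥(component (Set.range P.cartan) x)) (a : ↥(Set.Iic sω)),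
        a ∈ Q.ξ p ↔ (a : L) ∈ P.ξ (p : S) :=
  ⟨P.restrict sω _ hs, fun _ _ => Iff.rfl⟩
end

section
/- Let (Σ, L, ξ) be a state property system with Cartan map κ, let ω be a connection component of the closure space (Σ, κ(L)), and suppose there exists s(ω) ∈ L with κ(s(ω)) = ω. Then the state property system (Σ_ω, L_ω, ξ_ω), where Σ_ω = ω, L_ω = [0, s(ω)], and ξ_ω(p) = ξ(p) ∩ L_ω, is pure nonclassical: its only classical properties are 0 and s(ω). -/
section

variable {X : Type*} {F : Set (Set X)}

theorem IsConnectedSubset.inter_eq_empty_or_eq {A U B : Set X} (hA : IsConnectedSubset F A)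
    (hAU : A ⊆ U) (hB : ∃ C ∈ F, B = C ∩ U) (hUB : ∃ D ∈ F, U \ B = D ∩ U) :
    B ∩ A = ∅ ∨ B ∩ A = A := by
  obtain ⟨C, hC, rfl⟩ := hB
  obtain ⟨D, hD, hUD⟩ := hUB
  refine hA _ Set.inter_subset_right ⟨C, hC, ?_⟩ ⟨D, hD, ?_⟩
  · rw [Set.inter_assoc, Set.inter_eq_right.mpr hAU]
  · ext p
    constructor
    · rintro ⟨hpA, hpB⟩
      have hp : p ∈ U \ (C ∩ U) := ⟨hAU hpA, fun h => hpB ⟨h, hpA⟩⟩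
      exact ⟨(hUD ▸ hp).1, hpA⟩
    · rintro ⟨hpD, hpA⟩
      have hp : p ∈ U \ (C ∩ U) := hUD ▸ ⟨hpD, hAU hpA⟩
      exact ⟨hpA, fun h => hp.2 h.1⟩

theorem isConnectedSubset_sUnion_of_mem {𝒜 : Set (Set X)} {x : X} (hx : ∀ A ∈ 𝒜, x ∈ A)
    (h𝒜 : ∀ A ∈ 𝒜, IsConnectedSubset F A) : IsConnectedSubset F (⋃₀ 𝒜) := by
  intro B hB hBC hBD
  have hdich (A : Set X) (hA : A ∈ 𝒜) : B ∩ A = ∅ ∨ B ∩ A = A :=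
    (h𝒜 A hA).inter_eq_empty_or_eq (Set.subset_sUnion_of_mem hA) hBC hBD
  by_cases hxB : x ∈ B
  · refine Or.inr (hB.antisymm ?_)
    rintro p ⟨A, hA, hpA⟩
    rcases hdich A hA with h | h
    · exact (h ▸ ⟨hxB, hx A hA⟩ : x ∈ (∅ : Set X)).elim
    · exact (h.symm ▸ hpA : p ∈ B ∩ A).1
  · refine Or.inl (Set.eq_empty_of_forall_notMem fun p hpB => ?_)
    obtain ⟨A, hA, hpA⟩ := hB hpB
    rcases hdich A hA with h | h
    · exact (h ▸ ⟨hpB, hpA⟩ : p ∈ (∅ : Set X))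
    · exact hxB (h.symm ▸ hx A hA : x ∈ B ∩ A).1

theorem isConnectedSubset_component (x : X) : IsConnectedSubset F (component F x) :=
  isConnectedSubset_sUnion_of_mem (fun _ hA => hA.1) (fun _ hA => hA.2)

end

namespace SPS

variable {S L : Type*} [CompleteLattice L] (P : SPS S L)

theorem cartan_injective : Function.Injective P.cartan := fun _ _ h =>
  le_antisymm (P.cartan_subset_cartan_iff.mp h.le) (P.cartan_subset_cartan_iff.mp h.ge)

theorem cartan_inf (a b : L) : P.cartan (a ⊓ b) = P.cartan a ∩ P.cartan b := by
  ext p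
  refine ⟨fun h => ⟨?_, ?_⟩, fun ⟨ha, hb⟩ => ?_⟩
  · exact P.cartan_subset_cartan_iff.mpr inf_le_left h
  · exact P.cartan_subset_cartan_iff.mpr inf_le_right h
  · rw [← sInf_pair]
    exact P.sInf_mem p _ (Set.pair_subset ha hb)

theorem eq_bot_or_eq_of_isConnectedSubset_cartan {s a c : L}
    (hs : IsConnectedSubset (Set.range P.cartan) (P.cartan s)) (has : a ≤ s) (hac : a ⊓ c = ⊥)
    (hcover : P.cartan s ⊆ P.cartan a ∪ P.cartan c) : a = ⊥ ∨ a = s := by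
  have hsub : P.cartan a ⊆ P.cartan s := P.cartan_subset_cartan_iff.mpr has
  have hdisj : P.cartan a ∩ P.cartan c = ∅ := by rw [← cartan_inf, hac, cartan_bot]
  have hcompl : P.cartan s \ P.cartan a = P.cartan c ∩ P.cartan s := by
    ext p
    constructor
    · rintro ⟨hps, hpa⟩
      exact ⟨(hcover hps).resolve_left hpa, hps⟩
    · rintro ⟨hpc, hps⟩
      exact ⟨hps, fun hpa => (hdisj ▸ ⟨hpa, hpc⟩ : p ∈ (∅ : Set S))⟩
  rcases hs (P.cartan a) hsub ⟨_, Set.mem_range_self a, (Set.inter_eq_left.mpr hsub).symm⟩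
      ⟨_, Set.mem_range_self c, hcompl⟩ with h | h
  · exact Or.inl (P.cartan_injective (h.trans P.cartan_bot.symm))
  · exact Or.inr (P.cartan_injective h)

end SPS

/-- In the situation of the decomposition, the state property system
`(Σ_ω, L_ω, ξ_ω)` (with `Σ_ω = ω` a connection component of `(Σ, κ(L))`,
`L_ω = [0, s ω] = Set.Iic (s ω)` where `κ (s ω) = ω`, and `ξ_ω p = ξ p ∩ L_ω`) is pure
nonclassical: its only classical properties are its bottom `0 = ⊥` and its top
`s ω = ⊤`. -/
theorem stmt_11 {S L : Type*} [CompleteLattice L] (P : SPS S L) (x : S) (sω : L)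
    (hs : P.cartan sω = component (Set.range P.cartan) x)
    (Q : SPS ↥(component (Set.range P.cartan) x) ↥(Set.Iic sω))
    (hQ : ∀ (p : ↥(component (Set.range P.cartan) x)) (a : ↥(Set.Iic sω)),
      a ∈ Q.ξ p ↔ (a : L) ∈ P.ξ (p : S)) :
    ∀ a : ↥(Set.Iic sω), Q.IsClassical a → a = ⊥ ∨ a = ⊤ := by
  rintro a ⟨c, hsup, hinf, hssr⟩
  have hcover : P.cartan sω ⊆ P.cartan a ∪ P.cartan c := by
    intro p hp
    let q : ↥(component (Set.range P.cartan) x) := ⟨p, hs ▸ hp⟩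
    have htop : a ⊔ c ∈ Q.ξ q := by rwa [hsup, hQ]
    exact (hssr q htop).imp (hQ q a).mp (hQ q c).mp
  have hinfL : (a : L) ⊓ c = ⊥ := by simpa using congrArg Subtype.val hinf
  rcases P.eq_bot_or_eq_of_isConnectedSubset_cartan (hs ▸ isConnectedSubset_component x) a.2
    hinfL hcover with h | h
  · exact Or.inl (Subtype.ext h)
  · exact Or.inr (Subtype.ext h)
end

section
/- Let (Σ, L, ξ) be a state property system, let C' = {⋀_i a_i | (a_i)_i a family of classical properties of (Σ, L, ξ)} (a complete lattice under the order inherited from L, with infima those of L and suprema ⋁'_i a_i = ⋀{b ∈ C' | a_i ≤ b for all i}), and define ξ' : Σ → P(C') by ξ'(q) = ξ(q) ∩ C'. Then (Σ, C', ξ') is a state property system. -/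
theorem sInf_mem_setOf_eq_sInf {L : Type*} [CompleteLattice L] {Q : L → Prop} {A : Set L}
    (hA : ∀ a ∈ A, ∃ T : Set L, (∀ b ∈ T, Q b) ∧ a = sInf T) :
    ∃ T : Set L, (∀ b ∈ T, Q b) ∧ sInf A = sInf T := by
  refine ⟨{b | Q b ∧ sInf A ≤ b}, fun b hb => hb.1, le_antisymm (le_sInf fun b hb => hb.2) ?_⟩
  refine le_sInf fun a ha => ?_
  obtain ⟨T, hTQ, rfl⟩ := hA a ha
  exact sInf_le_sInf fun b hb => ⟨hTQ b hb, (sInf_le ha).trans (sInf_le hb)⟩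

namespace SPS

variable {S L : Type*} [CompleteLattice L] (P : SPS S L) {C : Set L}

theorem bot_not_mem_inter (p : S) : ⊥ ∉ P.ξ p ∩ C :=
  fun h => P.bot_not_mem p h.1

theorem sInf_mem_inter (hC : ∀ A ⊆ C, sInf A ∈ C) (p : S) {A : Set L}
    (hA : A ⊆ P.ξ p ∩ C) : sInf A ∈ P.ξ p ∩ C :=
  ⟨P.sInf_mem p A fun _ ha => (hA ha).1, hC A fun _ ha => (hA ha).2⟩

theorem le_iff_inter {a b : L} (ha : a ∈ C) (hb : b ∈ C) :
    a ≤ b ↔ ∀ r, a ∈ P.ξ r ∩ C → b ∈ P.ξ r ∩ C := by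
  rw [P.le_iff]
  exact forall_congr' fun r => ⟨fun h har => ⟨h har.1, hb⟩, fun h har => (h ⟨har, ha⟩).1⟩

end SPS

/-- Let `C' = {⋀_i a_i | (a_i) a family of classical properties}` (a complete
lattice under the order inherited from `L`, with infima those of `L` — so `C'` is closed
under `sInf` — with bottom `⊥`, top `⊤ = sInf ∅`) and `ξ' q = ξ q ∩ C'`.  Then
`(Σ, C', ξ')` is a state property system; spelled out:
(i) the bottom `⊥` of `C'` is in no `ξ' p`;
(ii) for every family `A ⊆ ξ' p`, its infimum (in `C'`, which agrees with `sInf` in `L`)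
     belongs to `ξ' p`;
(iii) for `a, b ∈ C'`: `a ≤ b ↔ ∀ r, a ∈ ξ' r → b ∈ ξ' r`. -/
theorem stmt_16 {S L : Type*} [CompleteLattice L] (P : SPS S L)
    (C' : Set L)
    (hC' : C' = {a : L | ∃ T : Set L, (∀ b ∈ T, P.IsClassical b) ∧ a = sInf T})
    (ξ' : S → Set L) (hξ' : ∀ q, ξ' q = P.ξ q ∩ C') :
    (∀ p, ⊥ ∉ ξ' p) ∧
    (∀ p, ∀ A ⊆ ξ' p, sInf A ∈ ξ' p) ∧
    (∀ a ∈ C', ∀ b ∈ C', (a ≤ b ↔ ∀ r, a ∈ ξ' r → b ∈ ξ' r)) := by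
  obtain rfl : ξ' = fun q => P.ξ q ∩ C' := funext hξ'
  have hC'_sInf : ∀ A ⊆ C', sInf A ∈ C' := by
    subst hC'
    exact fun A hA => sInf_mem_setOf_eq_sInf hA
  exact ⟨P.bot_not_mem_inter, fun p _ => P.sInf_mem_inter hC'_sInf p,
    fun _ ha _ hb => P.le_iff_inter ha hb⟩
end
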